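/- arXiv:2507.18889 — 5 statements merged into one kernel-verified Lean document; each statement's English description precedes it below -/
import Mathlib

section
/- For every integer m ≥ 1, the complete graph K_{2m+1} on vertices {0,1,...,2m} can be decomposed into m edge-disjoint Hamiltonian cycles. -/
/-!
Walecki's construction. Set the vertex `∞ = 2m` aside and identify the others with `ℤ/2m`.
The zigzag `0, 1, -1, 2, -2, …, m-1, -(m-1), m` lists `ℤ/2m`, and the `i`-th cycle runs from `∞`
through `i + 0, i + 1, i - 1, …, i + m` back to `∞`. Consecutive zigzag terms sum to `0` or `1`,
so an edge `{x, y}` of the `i`-th cycle avoiding `∞` has `x + y ∈ {2i, 2i + 1}`, while the edges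
at `∞` join it to `i` and `i + m`: every edge determines `i`, so the cycles are edge-disjoint.
As `m` cycles of length `2m + 1` account for all `(2m + 1).choose 2` edges, they cover `K_{2m+1}`.
-/

open Function Finset SimpleGraph

namespace SimpleGraph

theorem cycleGraph.isHamiltonianCycle_cycle (n : ℕ) : (cycleGraph.cycle n).IsHamiltonianCycle :=
  Walk.isHamiltonianCycle_iff_isCycle_and_length_eq.2
    ⟨cycleGraph.isCycle_cycle, by simp [cycleGraph.length_cycle]⟩

theorem cycleGraph.exists_eq_of_mem_edgeSet {n : ℕ} [NeZero n] {e : Sym2 (Fin n)}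
    (he : e ∈ (cycleGraph n).edgeSet) : ∃ k, e = s(k, k + 1) := by
  induction e using Sym2.ind with | _ u v => ?_
  have hsub : ∀ a b : Fin n, (a - b).val = 1 → a = b + 1 := fun a b h =>
    sub_eq_iff_eq_add'.1 <| Fin.ext <| by
      rw [h, Fin.val_one', Nat.mod_eq_of_lt (h ▸ (a - b).isLt)]
  rcases cycleGraph_adj'.1 he with h | h
  · exact ⟨v, by rw [hsub u v h, Sym2.eq_swap]⟩
  · exact ⟨u, by rw [hsub v u h]⟩

theorem exists_isHamiltonianCycle_edges_subset_image {V : Type*} [DecidableEq V]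
    {G : SimpleGraph V} {n : ℕ} (hn : 3 ≤ n) (f : cycleGraph n →g G) (hf : Bijective f) :
    ∃ (v : V) (w : G.Walk v v), w.IsHamiltonianCycle ∧
      ∀ e ∈ w.edges, e ∈ Sym2.map f '' (cycleGraph n).edgeSet := by
  obtain ⟨k, rfl⟩ : ∃ k, n = k + 3 := ⟨n - 3, by omega⟩
  refine ⟨f 0, (cycleGraph.cycle k).map f, (cycleGraph.isHamiltonianCycle_cycle k).map hf, ?_⟩
  rw [Walk.edges_map]
  intro e he
  obtain ⟨e', he', rfl⟩ := List.mem_map.1 he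
  exact ⟨e', Walk.edges_subset_edgeSet _ he', rfl⟩

theorem iUnion_edges_eq_edgeSet_of_pairwise_disjoint {V ι : Type*} [Fintype V] [Fintype ι]
    [DecidableEq V] {G : SimpleGraph V} [DecidableRel G.Adj] {v : ι → V}
    {w : ∀ i, G.Walk (v i) (v i)} (hw : ∀ i, (w i).IsHamiltonianCycle)
    (hdisj : Pairwise fun i j => Disjoint {e | e ∈ (w i).edges} {e | e ∈ (w j).edges})
    (hcard : #G.edgeFinset ≤ Fintype.card ι * Fintype.card V) :
    ⋃ i, {e | e ∈ (w i).edges} = G.edgeSet := by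
  have hunion : ⋃ i, {e | e ∈ (w i).edges} = ↑(univ.biUnion fun i => (w i).edges.toFinset) := by
    ext; simp
  have hdisj' : (↑(univ : Finset ι) : Set ι).PairwiseDisjoint fun i => (w i).edges.toFinset :=
    fun i _ j _ hij => by simpa [← Finset.disjoint_coe] using hdisj hij
  rw [hunion, ← coe_edgeFinset, coe_inj]
  refine eq_of_subset_of_card_le (fun e he => ?_) ?_
  · obtain ⟨i, -, he⟩ := mem_biUnion.1 he
    exact mem_edgeFinset.2 ((w i).edges_subset_edgeSet (List.mem_toFinset.1 he))
  · rw [card_biUnion hdisj']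
    simpa [List.toFinset_card_of_nodup (hw _).isCycle.edges_nodup, (hw _).length_eq] using hcard

end SimpleGraph

namespace Walecki

open Fin.CommRing

variable {m : ℕ}

def pairIndex (a b : Fin (2 * m + 1)) : ℕ :=
  Fin.lastCases (b.val % m) (fun x => Fin.lastCases (x.val % m) (fun y => (x + y).val / 2) b) a

theorem pairIndex_comm (a b : Fin (2 * m + 1)) : pairIndex a b = pairIndex b a := by
  induction a using Fin.lastCases <;> induction b using Fin.lastCases <;>
    simp [pairIndex, add_comm]

def edgeIndex : Sym2 (Fin (2 * m + 1)) → ℕ :=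
  Sym2.lift ⟨pairIndex, pairIndex_comm⟩

variable [NeZero m]

def zigzag (j : Fin (2 * m)) : Fin (2 * m) :=
  if j.val % 2 = 0 then -((j.val / 2 : ℕ) : Fin (2 * m)) else (((j.val + 1) / 2 : ℕ) : Fin (2 * m))

theorem val_zigzag (j : Fin (2 * m)) :
    (zigzag j).val =
      if j.val % 2 = 0 then (if j.val / 2 = 0 then 0 else 2 * m - j.val / 2)
      else (j.val + 1) / 2 := by
  have hj := j.isLt
  unfold zigzag
  split_ifs with _ h₀
  · simp [h₀]
  · rw [Fin.val_neg', Fin.val_natCast, Nat.mod_eq_of_lt (show j.val / 2 < 2 * m by omega),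
      Nat.mod_eq_of_lt (by omega)]
  · rw [Fin.val_natCast, Nat.mod_eq_of_lt (by omega)]

theorem zigzag_injective : Injective (zigzag (m := m)) := by
  intro j j' h
  have hval := congrArg Fin.val h
  rw [val_zigzag, val_zigzag] at hval
  have := j.isLt
  have := j'.isLt
  ext
  split_ifs at hval <;> omega

theorem zigzag_zero : zigzag (0 : Fin (2 * m)) = 0 := by
  simp [zigzag]

theorem val_zigzag_of_val_add_one_eq {j : Fin (2 * m)} (hj : j.val + 1 = 2 * m) :
    (zigzag j).val = m := by
  rw [val_zigzag]
  split_ifs <;> omega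

theorem zigzag_add_zigzag_add_one {j : Fin (2 * m)} (hj : j.val + 1 < 2 * m) :
    zigzag j + zigzag (j + 1) = 0 ∨ zigzag j + zigzag (j + 1) = 1 := by
  unfold zigzag
  rw [Fin.val_add_one_of_lt' hj]
  obtain ⟨u, hu | hu⟩ : ∃ u, j.val = 2 * u ∨ j.val = 2 * u + 1 := ⟨j.val / 2, by omega⟩
  · right
    rw [if_pos (by omega), if_neg (by omega), hu, show (2 * u + 1 + 1) / 2 = u + 1 by omega,
      show 2 * u / 2 = u by omega]
    push_cast
    ring
  · left
    rw [if_neg (by omega), if_pos (by omega), hu, show (2 * u + 1 + 1) / 2 = u + 1 by omega]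
    ring

def vertex (i : Fin m) : Fin (2 * m + 1) → Fin (2 * m + 1) :=
  Fin.lastCases (Fin.last (2 * m)) fun j => (Fin.castLE (by omega) i + zigzag j).castSucc

theorem vertex_injective (i : Fin m) : Injective (vertex i) := by
  intro a b h
  induction a using Fin.lastCases <;> induction b using Fin.lastCases <;>
    simp only [vertex, Fin.lastCases_last, Fin.lastCases_castSucc] at h
  · rfl
  · exact absurd h.symm (Fin.castSucc_ne_last _)
  · exact absurd h (Fin.castSucc_ne_last _)
  · rw [zigzag_injective (add_left_cancel (Fin.castSucc_injective _ h))]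

theorem vertex_last (i : Fin m) : vertex i (Fin.last (2 * m)) = Fin.last (2 * m) :=
  Fin.lastCases_last

theorem vertex_castSucc (i : Fin m) (j : Fin (2 * m)) :
    vertex i j.castSucc = (Fin.castLE (by omega) i + zigzag j).castSucc :=
  Fin.lastCases_castSucc j

theorem edgeIndex_vertex (i : Fin m) (k : Fin (2 * m + 1)) :
    edgeIndex s(vertex i k, vertex i (k + 1)) = i := by
  have hi := i.isLt
  induction k using Fin.lastCases with
  | last =>
    rw [Fin.last_add_one, ← Fin.castSucc_zero, vertex_last, vertex_castSucc, zigzag_zero,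
      add_zero]
    simp [edgeIndex, pairIndex, Nat.mod_eq_of_lt hi]
  | cast j =>
    rw [Fin.coeSucc_eq_succ]
    by_cases hj : j.val + 1 < 2 * m
    · rw [show j.succ = (j + 1).castSucc from Fin.ext (by simp [Fin.val_add_one_of_lt' hj]),
        vertex_castSucc, vertex_castSucc]
      simp only [edgeIndex, Sym2.lift_mk, pairIndex, Fin.lastCases_castSucc]
      rw [add_add_add_comm]
      have hsum : (zigzag j + zigzag (j + 1)).val ≤ 1 := by
        rcases zigzag_add_zigzag_add_one hj with h | h <;> simp [h, Nat.mod_le]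
      generalize zigzag j + zigzag (j + 1) = c at hsum ⊢
      rw [Fin.val_add, Fin.val_add, Fin.val_castLE,
        Nat.mod_eq_of_lt (show i.val + i.val < 2 * m by omega), Nat.mod_eq_of_lt (by omega)]
      omega
    · rw [show j.succ = Fin.last (2 * m) from Fin.ext (by simp; omega), vertex_castSucc,
        vertex_last]
      simp [edgeIndex, pairIndex, Fin.val_add, val_zigzag_of_val_add_one_eq (j := j) (by omega),
        Nat.mod_eq_of_lt hi]

def cycleHom (i : Fin m) : cycleGraph (2 * m + 1) →g completeGraph (Fin (2 * m + 1)) :=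
  ⟨vertex i, fun h => (vertex_injective i).ne h.ne⟩

theorem edgeIndex_map_vertex {i : Fin m} {e : Sym2 (Fin (2 * m + 1))}
    (he : e ∈ (cycleGraph (2 * m + 1)).edgeSet) : edgeIndex (e.map (vertex i)) = i := by
  obtain ⟨k, rfl⟩ := cycleGraph.exists_eq_of_mem_edgeSet he
  exact edgeIndex_vertex i k

end Walecki

/-- For every integer `m ≥ 1`, the complete graph `K_{2m+1}` on vertices `{0,...,2m}`
can be decomposed into `m` edge-disjoint Hamiltonian cycles: there exist `m` Hamiltonian
cycles whose edge sets are pairwise disjoint and whose union is the whole edge set. -/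
theorem complete_graph_odd_hamiltonian_decomposition (m : ℕ) (hm : 1 ≤ m) :
    ∃ E : Fin m → Set (Sym2 (Fin (2 * m + 1))),
      (∀ i : Fin m, ∃ (v : Fin (2 * m + 1))
          (w : (SimpleGraph.completeGraph (Fin (2 * m + 1))).Walk v v),
          w.IsHamiltonianCycle ∧ E i = {e | e ∈ w.edges}) ∧
      (∀ i j : Fin m, i ≠ j → Disjoint (E i) (E j)) ∧
      (⋃ i : Fin m, E i) = (SimpleGraph.completeGraph (Fin (2 * m + 1))).edgeSet := by
  have : NeZero m := ⟨by omega⟩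
  choose v w hw hedges using fun i : Fin m =>
    exists_isHamiltonianCycle_edges_subset_image (by omega) (Walecki.cycleHom i)
      (Finite.injective_iff_bijective.1 (Walecki.vertex_injective i))
  have hindex : ∀ i, ∀ e ∈ (w i).edges, Walecki.edgeIndex e = i := fun i e he => by
    obtain ⟨e', he', rfl⟩ := hedges i e he
    exact Walecki.edgeIndex_map_vertex he'
  have hdisj : Pairwise fun i j => Disjoint {e | e ∈ (w i).edges} {e | e ∈ (w j).edges} :=
    fun i j hij => Set.disjoint_left.2 fun e hi hj =>
      hij (Fin.ext ((hindex i e hi).symm.trans (hindex j e hj)))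
  refine ⟨fun i => {e | e ∈ (w i).edges}, fun i => ⟨v i, w i, hw i, rfl⟩, fun i j => @hdisj i j,
    iUnion_edges_eq_edgeSet_of_pairwise_disjoint hw hdisj ?_⟩
  rw [card_edgeFinset_top_eq_card_choose_two, Fintype.card_fin, Fintype.card_fin,
    Nat.choose_two_right]
  exact Nat.div_le_of_le_mul (le_of_eq (by rw [Nat.add_sub_cancel]; ring))
end

section
/- The m zigzag Hamiltonian paths on Z/2mZ (for i = 0,...,m-1), each extended to a cycle through an additional vertex v = 2m joined to the path's two endpoints, form m edge-disjoint Hamiltonian cycles whose union is all edges of K_{2m+1}. -/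
/-!
Identify `{0, …, 2m-1}` with `ZMod (2m)` and write the `k`-th vertex of `P_i` as `i + δ k` with
offsets `δ = 0, -1, 1, -2, 2, …, -m`. These offsets are distinct and lie in `[-m, m)`, so `P_i`
visits every residue once, and two of its vertices `i + δ k`, `i + δ l` sum to `2i` or `2i - 1`
exactly when `δ k + δ l ∈ {0, -1}`, i.e. when they are consecutive on the path. Thus the edges
of `P_i` are precisely the pairs `{a, b}` with `a + b ∈ {2i, 2i - 1}`; these classes partition
`ZMod (2m)` as `i` ranges over `[0, m)`, and the spokes of `C_i` go to the endpoints `i` and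
`i + m`, which also exhaust `ZMod (2m)` exactly once.
-/

/-- The `k`-th term of the zigzag sequence `(i, i-1, i+1, i-2, i+2, ...)` modulo `2m`,
as a natural number in `{0, ..., 2m-1}`. -/
def zigzagVal (m i k : ℕ) : ℕ :=
  (((if k % 2 = 0 then (i : ℤ) + k / 2 else (i : ℤ) - (k + 1) / 2) : ℤ) : ZMod (2 * m)).val

/-- The `k`-th vertex (cyclically) of the cycle `C_i`: the extra vertex `2m` followed by
the zigzag Hamiltonian path `(i, i-1, i+1, ..., i+m-1, i-m) mod 2m`. -/
def zigzagCycleVertex (m i k : ℕ) : ℕ :=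
  if k % (2 * m + 1) = 0 then 2 * m else zigzagVal m i (k % (2 * m + 1) - 1)

/-- The edge set of the cycle `C_i` (zigzag path `P_i` closed up through vertex `2m`). -/
def zigzagCycleEdges (m i : ℕ) : Set (Sym2 ℕ) :=
  {e | ∃ k < 2 * m + 1, e = s(zigzagCycleVertex m i k, zigzagCycleVertex m i (k + 1))}

open Function

theorem intCast_zmod_eq_zero_iff_of_abs_lt {n : ℕ} {x : ℤ} (hx : |x| < n) :
    (x : ZMod n) = 0 ↔ x = 0 :=
  ⟨fun h => Int.eq_zero_of_abs_lt_dvd ((ZMod.intCast_zmod_eq_zero_iff_dvd x n).1 h) hx,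
    fun h => by simp [h]⟩

def zigzagOffset (k : ℕ) : ℤ := if k % 2 = 0 then k / 2 else -((k + 1) / 2)

theorem zigzagOffset_injective : Injective zigzagOffset := by
  intro k l h
  unfold zigzagOffset at h
  split_ifs at h <;> omega

theorem zigzagOffset_mem_Ico {m k : ℕ} (hk : k < 2 * m) :
    zigzagOffset k ∈ Set.Ico (-(m : ℤ)) m := by
  unfold zigzagOffset
  split_ifs <;> simp only [Set.mem_Ico] <;> omega

theorem zigzagOffset_add_eq_zero_or_neg_one_iff {k l : ℕ} (hkl : k ≠ l) :
    (zigzagOffset k + zigzagOffset l = 0 ∨ zigzagOffset k + zigzagOffset l = -1) ↔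
      (l = k + 1 ∨ k = l + 1) := by
  unfold zigzagOffset
  split_ifs <;> omega

section ZigzagPoint

variable {m i k l : ℕ}

def zigzagPoint (m i k : ℕ) : ZMod (2 * m) := ((i + zigzagOffset k : ℤ) : ZMod (2 * m))

theorem zigzagVal_eq_val_zigzagPoint (m i k : ℕ) :
    zigzagVal m i k = (zigzagPoint m i k).val := by
  unfold zigzagVal zigzagPoint zigzagOffset
  congr 2
  split_ifs <;> omega

theorem zigzagPoint_zero : zigzagPoint m i 0 = i := by
  simp [zigzagPoint, zigzagOffset]

theorem zigzagPoint_two_mul_sub_one [NeZero m] :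
    zigzagPoint m i (2 * m - 1) = ((i + m : ℕ) : ZMod (2 * m)) := by
  have hoff : zigzagOffset (2 * m - 1) = -m := by
    have := NeZero.pos m
    unfold zigzagOffset
    split_ifs <;> omega
  have h2m : ((2 * m : ℕ) : ZMod (2 * m)) = 0 := ZMod.natCast_self _
  rw [zigzagPoint, hoff]
  push_cast at h2m ⊢
  linear_combination -h2m

theorem eq_of_zigzagPoint_eq (hk : k < 2 * m) (hl : l < 2 * m)
    (h : zigzagPoint m i k = zigzagPoint m i l) : k = l := by
  have hk' := zigzagOffset_mem_Ico hk
  have hl' := zigzagOffset_mem_Ico hl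
  rw [zigzagPoint, zigzagPoint, ← sub_eq_zero, ← Int.cast_sub, add_sub_add_left_eq_sub,
    intCast_zmod_eq_zero_iff_of_abs_lt] at h
  · exact zigzagOffset_injective (sub_eq_zero.1 h)
  · simp only [Set.mem_Ico] at hk' hl'
    push_cast
    rw [abs_lt]
    omega

theorem exists_zigzagPoint_eq [NeZero m] (a : ZMod (2 * m)) :
    ∃ k < 2 * m, zigzagPoint m i k = a := by
  have hbij : Bijective fun k : Fin (2 * m) => zigzagPoint m i k :=
    (Fintype.bijective_iff_injective_and_card _).2
      ⟨fun k l h => Fin.ext (eq_of_zigzagPoint_eq k.isLt l.isLt h), by simp⟩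
  obtain ⟨k, hk⟩ := hbij.2 a
  exact ⟨k, k.isLt, hk⟩

def pathSums (m i : ℕ) : Set (ZMod (2 * m)) :=
  {2 * (i : ZMod (2 * m)), 2 * (i : ZMod (2 * m)) - 1}

theorem zigzagPoint_add_mem_pathSums_iff (hk : k < 2 * m) (hl : l < 2 * m) (hkl : k ≠ l) :
    zigzagPoint m i k + zigzagPoint m i l ∈ pathSums m i ↔ l = k + 1 ∨ k = l + 1 := by
  rw [← zigzagOffset_add_eq_zero_or_neg_one_iff hkl]
  have hk' := zigzagOffset_mem_Ico hk
  have hl' := zigzagOffset_mem_Ico hl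
  have hne : zigzagOffset k ≠ zigzagOffset l := zigzagOffset_injective.ne hkl
  simp only [Set.mem_Ico] at hk' hl'
  set x := zigzagOffset k + zigzagOffset l
  have hsum : zigzagPoint m i k + zigzagPoint m i l = 2 * i + ((x : ℤ) : ZMod (2 * m)) := by
    simp only [zigzagPoint, x]
    push_cast
    ring
  have hx0 : ((x : ℤ) : ZMod (2 * m)) = 0 ↔ x = 0 :=
    intCast_zmod_eq_zero_iff_of_abs_lt (by rw [abs_lt]; push_cast; omega)
  have hx1 : ((x + 1 : ℤ) : ZMod (2 * m)) = 0 ↔ x = -1 := by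
    rw [intCast_zmod_eq_zero_iff_of_abs_lt (by rw [abs_lt]; push_cast; omega)]
    omega
  push_cast at hx1
  rw [hsum, pathSums, Set.mem_insert_iff, Set.mem_singleton_iff, add_eq_left, hx0,
    eq_sub_iff_add_eq, add_assoc, add_eq_left, hx1]

theorem mem_pathSums_iff [NeZero m] (hi : i < m) {c : ZMod (2 * m)} :
    c ∈ pathSums m i ↔ (c + 1).val / 2 = i := by
  rw [pathSums, Set.mem_insert_iff, Set.mem_singleton_iff]
  constructor
  · rintro (rfl | rfl)
    · rw [show 2 * (i : ZMod (2 * m)) + 1 = ((2 * i + 1 : ℕ) : ZMod (2 * m)) by push_cast; rfl,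
        ZMod.val_cast_of_lt (by omega)]
      omega
    · rw [sub_add_cancel,
        show 2 * (i : ZMod (2 * m)) = ((2 * i : ℕ) : ZMod (2 * m)) by push_cast; rfl,
        ZMod.val_cast_of_lt (by omega)]
      omega
  · intro h
    have hc : c = (((c + 1).val : ℕ) : ZMod (2 * m)) - 1 := by
      rw [ZMod.natCast_zmod_val, add_sub_cancel_right]
    generalize (c + 1).val = v at h hc
    rcases Nat.even_or_odd' v with ⟨t, rfl | rfl⟩
    · right
      rw [hc, show t = i by omega]
      push_cast
      rfl
    · left
      rw [hc, show t = i by omega]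
      push_cast
      ring

end ZigzagPoint

section Cycle

variable {m i : ℕ}

theorem zigzagCycleVertex_zero : zigzagCycleVertex m i 0 = 2 * m := by
  simp [zigzagCycleVertex]

theorem zigzagCycleVertex_two_mul_add_one : zigzagCycleVertex m i (2 * m + 1) = 2 * m := by
  simp [zigzagCycleVertex]

theorem zigzagCycleVertex_succ {k : ℕ} (hk : k < 2 * m) :
    zigzagCycleVertex m i (k + 1) = (zigzagPoint m i k).val := by
  rw [zigzagCycleVertex, Nat.mod_eq_of_lt (by omega), if_neg (by omega), Nat.add_sub_cancel,
    zigzagVal_eq_val_zigzagPoint]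

theorem zigzagCycleVertex_injective [NeZero m] :
    Injective fun k : Fin (2 * m + 1) => zigzagCycleVertex m i k := by
  rintro ⟨_ | k, hk⟩ ⟨_ | l, hl⟩ h
  · rfl
  · have := ZMod.val_lt (zigzagPoint m i l)
    simp only [zigzagCycleVertex_zero, zigzagCycleVertex_succ (by omega : l < 2 * m)] at h
    omega
  · have := ZMod.val_lt (zigzagPoint m i k)
    simp only [zigzagCycleVertex_zero, zigzagCycleVertex_succ (by omega : k < 2 * m)] at h
    omega
  · simp only [zigzagCycleVertex_succ (by omega : k < 2 * m),
      zigzagCycleVertex_succ (by omega : l < 2 * m)] at h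
    obtain rfl := eq_of_zigzagPoint_eq (by omega) (by omega) (ZMod.val_injective _ h)
    rfl

theorem zigzagCycle_first_edge (hi : i < m) :
    s(zigzagCycleVertex m i 0, zigzagCycleVertex m i 1) = s(2 * m, i) := by
  rw [zigzagCycleVertex_zero, zigzagCycleVertex_succ (by omega), zigzagPoint_zero,
    ZMod.val_cast_of_lt (by omega)]

theorem zigzagCycle_last_edge [NeZero m] (hi : i < m) :
    s(zigzagCycleVertex m i (2 * m), zigzagCycleVertex m i (2 * m + 1)) = s(2 * m, i + m) := by
  have := NeZero.pos m
  rw [zigzagCycleVertex_two_mul_add_one, show 2 * m = 2 * m - 1 + 1 by omega,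
    zigzagCycleVertex_succ (by omega), zigzagPoint_two_mul_sub_one,
    ZMod.val_cast_of_lt (by omega), Sym2.eq_swap, Nat.sub_add_cancel (by omega)]

theorem mem_zigzagCycleEdges_iff [NeZero m] (hi : i < m) {e : Sym2 ℕ} :
    e ∈ zigzagCycleEdges m i ↔
      e = s(2 * m, i) ∨ e = s(2 * m, i + m) ∨
      ∃ a b : ℕ, a < 2 * m ∧ b < 2 * m ∧ a ≠ b ∧
        ((a + b : ℕ) : ZMod (2 * m)) ∈ pathSums m i ∧ e = s(a, b) := by
  constructor
  · rintro ⟨_ | k, hk, rfl⟩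
    · exact Or.inl (zigzagCycle_first_edge hi)
    rcases (show k + 1 = 2 * m ∨ k + 1 < 2 * m by omega) with hk' | hk'
    · rw [hk']
      exact Or.inr (Or.inl (zigzagCycle_last_edge hi))
    · right; right
      refine ⟨_, _, ZMod.val_lt _, ZMod.val_lt _, ?_, ?_, by
        rw [zigzagCycleVertex_succ (by omega), zigzagCycleVertex_succ hk']⟩
      · exact fun h => by simpa using eq_of_zigzagPoint_eq (by omega) hk' (ZMod.val_injective _ h)
      · rw [Nat.cast_add, ZMod.natCast_zmod_val, ZMod.natCast_zmod_val,
          zigzagPoint_add_mem_pathSums_iff (by omega) hk' (by omega)]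
        exact Or.inl rfl
  · rintro (rfl | rfl | ⟨a, b, ha, hb, hab, hsum, rfl⟩)
    · exact ⟨0, by omega, (zigzagCycle_first_edge hi).symm⟩
    · exact ⟨2 * m, by omega, (zigzagCycle_last_edge hi).symm⟩
    obtain ⟨k, hk, hka⟩ := exists_zigzagPoint_eq (i := i) (a : ZMod (2 * m))
    obtain ⟨l, hl, hlb⟩ := exists_zigzagPoint_eq (i := i) (b : ZMod (2 * m))
    have hkl : k ≠ l := by
      rintro rfl
      exact hab (by rw [← ZMod.val_cast_of_lt ha, ← hka, hlb, ZMod.val_cast_of_lt hb])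
    rw [Nat.cast_add, ← hka, ← hlb, zigzagPoint_add_mem_pathSums_iff hk hl hkl] at hsum
    rw [← ZMod.val_cast_of_lt ha, ← ZMod.val_cast_of_lt hb, ← hka, ← hlb]
    rcases hsum with rfl | rfl
    · exact ⟨k + 1, by omega, by rw [zigzagCycleVertex_succ hk, zigzagCycleVertex_succ hl]⟩
    · exact ⟨l + 1, by omega, by
        rw [zigzagCycleVertex_succ hk, zigzagCycleVertex_succ hl, Sym2.eq_swap]⟩

theorem disjoint_zigzagCycleEdges {j : ℕ} (hi : i < m) (hj : j < m) (hij : i ≠ j) :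
    Disjoint (zigzagCycleEdges m i) (zigzagCycleEdges m j) := by
  have : NeZero m := ⟨by omega⟩
  rw [Set.disjoint_left]
  intro e hei hej
  rw [mem_zigzagCycleEdges_iff hi] at hei
  rw [mem_zigzagCycleEdges_iff hj] at hej
  rcases hei with rfl | rfl | ⟨a, b, ha, hb, -, hsum, rfl⟩ <;>
    rcases hej with h | h | ⟨c, d, hc, hd, -, hsum', h⟩ <;>
    simp only [Sym2.eq_iff] at h <;> try omega
  have hcd : c + d = a + b := by omega
  rw [hcd, mem_pathSums_iff hj] at hsum'
  rw [mem_pathSums_iff hi] at hsum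
  exact hij (hsum.symm.trans hsum')

theorem iUnion_zigzagCycleEdges (m : ℕ) :
    (⋃ i ∈ Finset.range m, zigzagCycleEdges m i) =
      {e : Sym2 ℕ | ∃ a b : ℕ, a ≠ b ∧ a ≤ 2 * m ∧ b ≤ 2 * m ∧ e = s(a, b)} := by
  ext e
  simp only [Set.mem_iUnion, Finset.mem_range, exists_prop, Set.mem_ofPred_eq]
  constructor
  · rintro ⟨i, hi, he⟩
    have : NeZero m := ⟨by omega⟩
    rcases (mem_zigzagCycleEdges_iff hi).1 he with rfl | rfl | ⟨a, b, ha, hb, hab, -, rfl⟩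
    exacts [⟨2 * m, i, by omega, le_rfl, by omega, rfl⟩,
      ⟨2 * m, i + m, by omega, le_rfl, by omega, rfl⟩, ⟨a, b, hab, ha.le, hb.le, rfl⟩]
  · rintro ⟨a, b, hab, ha, hb, rfl⟩
    have : NeZero m := ⟨by omega⟩
    have hub : ∀ x < 2 * m, ∃ i < m, s(2 * m, x) ∈ zigzagCycleEdges m i := by
      intro x hx
      rcases Nat.lt_or_ge x m with hxm | hxm
      · exact ⟨x, hxm, (mem_zigzagCycleEdges_iff hxm).2 (Or.inl rfl)⟩
      · refine ⟨x - m, by omega, (mem_zigzagCycleEdges_iff (by omega)).2 (Or.inr (Or.inl ?_))⟩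
        rw [Nat.sub_add_cancel hxm]
    rcases (show a = 2 * m ∨ b = 2 * m ∨ (a < 2 * m ∧ b < 2 * m) by omega)
      with rfl | rfl | ⟨ha', hb'⟩
    · exact hub b (by omega)
    · rw [Sym2.eq_swap]
      exact hub a (by omega)
    · set c : ZMod (2 * m) := ((a + b : ℕ) : ZMod (2 * m))
      have hc : (c + 1).val / 2 < m := by have := ZMod.val_lt (c + 1); omega
      refine ⟨_, hc, (mem_zigzagCycleEdges_iff hc).2 (Or.inr (Or.inr ?_))⟩
      exact ⟨a, b, ha', hb', hab, (mem_pathSums_iff hc).2 rfl, rfl⟩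

end Cycle

theorem zigzag_cycles_decompose_complete_graph_general (m : ℕ) :
    (∀ i < m, Function.Injective (fun k : Fin (2 * m + 1) => zigzagCycleVertex m i k)) ∧
    (∀ i < m, ∀ j < m, i ≠ j →
      Disjoint (zigzagCycleEdges m i) (zigzagCycleEdges m j)) ∧
    (⋃ i ∈ Finset.range m, zigzagCycleEdges m i) =
      {e : Sym2 ℕ | ∃ a b : ℕ, a ≠ b ∧ a ≤ 2 * m ∧ b ≤ 2 * m ∧ e = s(a, b)} := by
  refine ⟨fun i hi => ?_, fun i hi j hj hij => disjoint_zigzagCycleEdges hi hj hij,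
    iUnion_zigzagCycleEdges m⟩
  have : NeZero m := ⟨by omega⟩
  exact zigzagCycleVertex_injective

/-- The `m` zigzag Hamiltonian cycles `C_0, ..., C_{m-1}` on `{0,...,2m}` are Hamiltonian
(each visits all `2m+1` vertices), pairwise edge-disjoint, and their union is the edge set
of the complete graph `K_{2m+1}` on `{0,...,2m}`. -/
theorem zigzag_cycles_decompose_complete_graph (m : ℕ) (hm : 1 ≤ m) :
    (∀ i < m, Function.Injective (fun k : Fin (2 * m + 1) => zigzagCycleVertex m i k)) ∧
    (∀ i < m, ∀ j < m, i ≠ j →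
      Disjoint (zigzagCycleEdges m i) (zigzagCycleEdges m j)) ∧
    (⋃ i ∈ Finset.range m, zigzagCycleEdges m i) =
      {e : Sym2 ℕ | ∃ a b : ℕ, a ≠ b ∧ a ≤ 2 * m ∧ b ≤ 2 * m ∧ e = s(a, b)} :=
  zigzag_cycles_decompose_complete_graph_general m
end

section
/- In the zigzag path construction, distinct indices i ≠ j in {0,...,m-1} yield edge-disjoint paths on Z/2mZ: no edge {a, b} of Z/2mZ appears in both P_i and P_j. -/
/-!
The sum of the endpoints of an edge is an invariant of the edge. Every edge of `P_i` has
endpoint sum `2i - 1` or `2i` modulo `2m`, i.e. `2i + r - 1` with `r ∈ {0, 1}`. Since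
`0 ≤ 2i + r < 2m`, the residue of `2i + r` modulo `2m` determines `i`, so a common edge of
`P_i` and `P_j` forces `i = j`.
-/

/-- The `k`-th term of the zigzag sequence for offset `i`, as an element of `ZMod (2m)`:
`i + k/2` for even `k` and `i - (k+1)/2` for odd `k`. -/
def zigzagTerm (m i k : ℕ) : ZMod (2 * m) :=
  ((if k % 2 = 0 then (i : ℤ) + k / 2 else (i : ℤ) - (k + 1) / 2 : ℤ) : ZMod (2 * m))

/-- The edge set of the zigzag Hamiltonian path `P_i` on `ZMod (2m)`: the unordered pairs
of consecutive terms of the zigzag sequence. -/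
def zigzagPathEdges (m i : ℕ) : Set (Sym2 (ZMod (2 * m))) :=
  {e | ∃ k < 2 * m - 1, e = s(zigzagTerm m i k, zigzagTerm m i (k + 1))}

def edgeSum {α : Type*} [AddCommMagma α] : Sym2 α → α :=
  Sym2.lift ⟨(· + ·), add_comm⟩

@[simp]
lemma edgeSum_mk {α : Type*} [AddCommMagma α] (a b : α) : edgeSum s(a, b) = a + b := rfl

lemma zigzagTerm_add_zigzagTerm_succ_add_one (m i k : ℕ) :
    zigzagTerm m i k + zigzagTerm m i (k + 1) + 1 = ((2 * i + k % 2 : ℕ) : ZMod (2 * m)) := by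
  rw [← Int.cast_natCast, zigzagTerm, zigzagTerm, ← Int.cast_one (R := ZMod (2 * m)),
    ← Int.cast_add, ← Int.cast_add]
  congr 1
  split_ifs <;> push_cast <;> omega

lemma exists_edgeSum_add_one_of_mem_zigzagPathEdges {m i : ℕ} {e : Sym2 (ZMod (2 * m))}
    (he : e ∈ zigzagPathEdges m i) :
    ∃ r < 2, edgeSum e + 1 = ((2 * i + r : ℕ) : ZMod (2 * m)) := by
  obtain ⟨k, -, rfl⟩ := he
  exact ⟨k % 2, Nat.mod_lt k two_pos, zigzagTerm_add_zigzagTerm_succ_add_one m i k⟩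

lemma ZMod.natCast_injOn_lt (n : ℕ) : Set.InjOn (Nat.cast : ℕ → ZMod n) (Set.Iio n) :=
  fun a ha b hb hab => by
    rw [← ZMod.val_natCast_of_lt ha, ← ZMod.val_natCast_of_lt hb, hab]

theorem zigzag_paths_edge_disjoint_general (m i j : ℕ)
    (hi : i < m) (hj : j < m) (hij : i ≠ j) :
    Disjoint (zigzagPathEdges m i) (zigzagPathEdges m j) := by
  refine Set.disjoint_left.mpr fun e hei hej => hij ?_
  obtain ⟨r, hr, hri⟩ := exists_edgeSum_add_one_of_mem_zigzagPathEdges hei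
  obtain ⟨s, hs, hsj⟩ := exists_edgeSum_add_one_of_mem_zigzagPathEdges hej
  have : 2 * i + r = 2 * j + s :=
    ZMod.natCast_injOn_lt (2 * m) (Set.mem_Iio.mpr (by omega))
      (Set.mem_Iio.mpr (by omega)) (hri.symm.trans hsj)
  omega

/-- Distinct indices `i ≠ j` in `{0, ..., m-1}` yield edge-disjoint zigzag paths on
`ZMod (2m)`: no edge appears in both `P_i` and `P_j`. -/
theorem zigzag_paths_edge_disjoint (m i j : ℕ) (hm : 1 ≤ m)
    (hi : i < m) (hj : j < m) (hij : i ≠ j) :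
    Disjoint (zigzagPathEdges m i) (zigzagPathEdges m j) :=
  zigzag_paths_edge_disjoint_general m i j hi hj hij
end

section
/- Worst-case availability with 2a faults: in an n×n grid of nodes where a faulted node forces removing its entire row or its entire column, if 2a faulted nodes lie in pairwise distinct rows and pairwise distinct columns, then the maximum surviving rectangular subgrid (obtained by deleting a set of rows and columns covering all faults) has size exactly (n−a)×(n−a), i.e., (n−a)^2 nodes. -/
/-!
Since the faults form a partial matching, a row or a column deleted covers at most one fault, so
any covering deletes `|R| + |C| ≥ 2a` lines, and by AM–GM `(n - |R|)(n - |C|) ≤ (n - a)²`.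
Deleting the rows of half of the faults and the columns of the other half attains this.
-/

namespace Finset

variable {α β : Type*} [DecidableEq α]

theorem card_le_card_add_card_of_forall_fst_mem_or_snd_mem {F : Finset (α × β)}
    (hfst : Set.InjOn Prod.fst (F : Set (α × β)))
    (hsnd : Set.InjOn Prod.snd (F : Set (α × β)))
    {R : Finset α} {C : Finset β}
    (hcov : ∀ f ∈ F, f.1 ∈ R ∨ f.2 ∈ C) :
    #F ≤ #R + #C := by
  have hR : #(F.filter (·.1 ∈ R)) ≤ #R :=
    card_le_card_of_injOn Prod.fst (fun f hf => (mem_filter.1 hf).2)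
      (hfst.mono (coe_subset.2 (filter_subset _ F)))
  have hC : #(F.filter (·.1 ∉ R)) ≤ #C :=
    card_le_card_of_injOn Prod.snd
      (fun f hf => (hcov f (mem_filter.1 hf).1).resolve_left (mem_filter.1 hf).2)
      (hsnd.mono (coe_subset.2 (filter_subset _ F)))
  have hsplit := card_filter_add_card_filter_not (s := F) (p := (·.1 ∈ R))
  omega

theorem exists_forall_fst_mem_or_snd_mem_of_le_card [DecidableEq β] {F : Finset (α × β)}
    (hfst : Set.InjOn Prod.fst (F : Set (α × β)))
    (hsnd : Set.InjOn Prod.snd (F : Set (α × β)))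
    {k : ℕ} (hk : k ≤ #F) :
    ∃ (R : Finset α) (C : Finset β),
      (∀ f ∈ F, f.1 ∈ R ∨ f.2 ∈ C) ∧ #R = k ∧ #C = #F - k := by
  obtain ⟨S, hSF, hS⟩ := exists_subset_card_eq hk
  refine ⟨S.image Prod.fst, (F \ S).image Prod.snd, fun f hf => ?_, ?_, ?_⟩
  · by_cases h : f ∈ S
    · exact Or.inl (mem_image_of_mem _ h)
    · exact Or.inr (mem_image_of_mem _ (mem_sdiff.2 ⟨hf, h⟩))
  · rw [card_image_of_injOn (hfst.mono (coe_subset.2 hSF)), hS]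
  · rw [card_image_of_injOn (hsnd.mono (coe_subset.2 sdiff_subset)), card_sdiff_of_subset hSF,
      hS]

end Finset

theorem Nat.mul_le_sq_of_add_le_two_mul {x y m : ℕ} (h : x + y ≤ 2 * m) : x * y ≤ m ^ 2 := by
  nlinarith [sq_nonneg ((x : ℤ) - y)]

/-- Worst-case availability with `2a` faults: in an `n × n` grid, if `2a` faulted nodes
lie in pairwise distinct rows and pairwise distinct columns (with `2a ≤ n`), then the
maximum surviving rectangular subgrid size, over all deletions of a set of rows and
columns covering all faults, equals `(n - a)^2`. -/
theorem worst_case_availability (n a : ℕ) (ha : 2 * a ≤ n)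
    (F : Finset (Fin n × Fin n)) (hcard : F.card = 2 * a)
    (hrows : ∀ f ∈ F, ∀ g ∈ F, f ≠ g → f.1 ≠ g.1)
    (hcols : ∀ f ∈ F, ∀ g ∈ F, f ≠ g → f.2 ≠ g.2) :
    IsGreatest {s : ℕ | ∃ R C : Finset (Fin n),
        (∀ f ∈ F, f.1 ∈ R ∨ f.2 ∈ C) ∧ s = (n - R.card) * (n - C.card)}
      ((n - a) ^ 2) := by
  have hfst : Set.InjOn Prod.fst (F : Set (Fin n × Fin n)) := fun f hf g hg h =>
    by_contra fun hne => hrows f hf g hg hne h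
  have hsnd : Set.InjOn Prod.snd (F : Set (Fin n × Fin n)) := fun f hf g hg h =>
    by_contra fun hne => hcols f hf g hg hne h
  constructor
  · obtain ⟨R, C, hcov, hR, hC⟩ :=
      Finset.exists_forall_fst_mem_or_snd_mem_of_le_card hfst hsnd (k := a) (by omega)
    exact ⟨R, C, hcov, by rw [hR, hC, hcard, sq]; congr 2; omega⟩
  · rintro s ⟨R, C, hcov, rfl⟩
    have hlines := Finset.card_le_card_add_card_of_forall_fst_mem_or_snd_mem hfst hsnd hcov
    exact Nat.mul_le_sq_of_add_le_two_mul (by omega)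
end

section
/- If all faulted cells of an n×n grid are 'isolated' (no two share a row or column), with f faults total, then the maximum surviving rectangle after deleting rows/columns covering all faults is (n − ⌈f/2⌉)·(n − ⌊f/2⌋). -/
/-! Every fault costs a deleted row or a deleted column, and a deleted line covers at most one
isolated fault, so `|R| + |C| ≥ f`; conversely deleting the rows of `⌈f/2⌉` faults and the
columns of the other `⌊f/2⌋` covers everything. With the sum of the side lengths
`(n - |R|) + (n - |C|)` at most `2n - f`, the product is largest when the sides are balanced. -/

open Finset

lemma Nat.mul_le_div_two_mul_succ_div_two {x y s : ℕ} (h : x + y ≤ s) :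
    x * y ≤ (s / 2) * ((s + 1) / 2) := by
  wlog hxy : x ≤ y generalizing x y
  · rw [mul_comm]
    exact this (by omega) (by omega)
  -- with `s / 2 = x + d`, balancing moves `d` from `y` to `x`
  obtain ⟨d, hd⟩ : ∃ d, s / 2 = x + d := ⟨s / 2 - x, by omega⟩
  rw [hd]
  calc x * y ≤ x * ((s + 1) / 2 + d) := Nat.mul_le_mul_left x (by omega)
    _ ≤ (x + d) * ((s + 1) / 2) := by
      nlinarith [Nat.mul_le_mul_left d (show x ≤ (s + 1) / 2 by omega)]

lemma Nat.sub_mul_sub_le_of_le_add {n a b f : ℕ} (h : f ≤ a + b) :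
    (n - a) * (n - b) ≤ (n - (f + 1) / 2) * (n - f / 2) := by
  rcases le_or_gt a n with ha | ha
  · rcases le_or_gt b n with hb | hb
    · have key := Nat.mul_le_div_two_mul_succ_div_two (x := n - a) (y := n - b)
        (s := 2 * n - f) (by omega)
      rwa [show (2 * n - f) / 2 = n - (f + 1) / 2 by omega,
        show (2 * n - f + 1) / 2 = n - f / 2 by omega] at key
    · simp [Nat.sub_eq_zero_of_le hb.le]
  · simp [Nat.sub_eq_zero_of_le ha.le]

section Cover

variable {α β : Type*} {F : Finset (α × β)}

theorem Finset.card_le_card_add_card_of_cover (hfst : Set.InjOn Prod.fst (F : Set (α × β)))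
    (hsnd : Set.InjOn Prod.snd (F : Set (α × β))) {R : Finset α} {C : Finset β}
    (hcov : ∀ p ∈ F, p.1 ∈ R ∨ p.2 ∈ C) : #F ≤ #R + #C := by
  classical
  calc #F ≤ #(F.filter (·.1 ∈ R) ∪ F.filter (·.2 ∈ C)) :=
        card_le_card fun p hp => by simpa [hp] using hcov p hp
    _ ≤ #(F.filter (·.1 ∈ R)) + #(F.filter (·.2 ∈ C)) := card_union_le _ _
    _ ≤ #R + #C := add_le_add
        (card_le_card_of_injOn _ (fun p hp => (mem_filter.1 hp).2)
          (hfst.mono (coe_subset.2 (filter_subset _ _))))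
        (card_le_card_of_injOn _ (fun p hp => (mem_filter.1 hp).2)
          (hsnd.mono (coe_subset.2 (filter_subset _ _))))

theorem Finset.exists_cover_card_eq [DecidableEq α] [DecidableEq β]
    (hfst : Set.InjOn Prod.fst (F : Set (α × β))) (hsnd : Set.InjOn Prod.snd (F : Set (α × β)))
    {k : ℕ} (hk : k ≤ #F) :
    ∃ (R : Finset α) (C : Finset β), (∀ p ∈ F, p.1 ∈ R ∨ p.2 ∈ C) ∧
      #R = k ∧ #C = #F - k := by
  obtain ⟨G, hGF, hG⟩ := exists_subset_card_eq hk
  refine ⟨G.image Prod.fst, (F \ G).image Prod.snd, fun p hp => ?_, ?_, ?_⟩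
  · by_cases hpG : p ∈ G
    · exact .inl (mem_image_of_mem _ hpG)
    · exact .inr (mem_image_of_mem _ (mem_sdiff.2 ⟨hp, hpG⟩))
  · rw [card_image_of_injOn (hfst.mono (by simpa using hGF)), hG]
  · rw [card_image_of_injOn (hsnd.mono (by simp)), card_sdiff_of_subset hGF, hG]

end Cover

lemma Set.injOn_of_ne_imp_ne {α β : Type*} {f : α → β} {s : Set α}
    (h : ∀ p ∈ s, ∀ q ∈ s, p ≠ q → f p ≠ f q) : Set.InjOn f s :=
  fun p hp q hq hpq => by_contra fun hne => h p hp q hq hne hpq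

theorem isolated_faults_max_allocation_general (n f : ℕ)
    (F : Finset (Fin n × Fin n)) (hcard : F.card = f)
    (hrows : ∀ p ∈ F, ∀ q ∈ F, p ≠ q → p.1 ≠ q.1)
    (hcols : ∀ p ∈ F, ∀ q ∈ F, p ≠ q → p.2 ≠ q.2) :
    IsGreatest {s : ℕ | ∃ R C : Finset (Fin n),
        (∀ p ∈ F, p.1 ∈ R ∨ p.2 ∈ C) ∧ s = (n - R.card) * (n - C.card)}
      ((n - (f + 1) / 2) * (n - f / 2)) := by
  have hfst := Set.injOn_of_ne_imp_ne hrows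
  have hsnd := Set.injOn_of_ne_imp_ne hcols
  constructor
  · obtain ⟨R, C, hcov, hR, hC⟩ :=
      exists_cover_card_eq hfst hsnd (k := (f + 1) / 2) (by omega)
    exact ⟨R, C, hcov, by rw [hR, hC, hcard, show f - (f + 1) / 2 = f / 2 by omega]⟩
  · rintro s ⟨R, C, hcov, rfl⟩
    exact Nat.sub_mul_sub_le_of_le_add (hcard ▸ card_le_card_add_card_of_cover hfst hsnd hcov)

/-- If all `f` faulted cells of an `n × n` grid are isolated (pairwise distinct rows and
columns, `f ≤ n`), then the maximum surviving rectangle after deleting rows and columns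
covering all faults is `(n - ⌈f/2⌉) * (n - ⌊f/2⌋)`. -/
theorem isolated_faults_max_allocation (n f : ℕ) (hf : f ≤ n)
    (F : Finset (Fin n × Fin n)) (hcard : F.card = f)
    (hrows : ∀ p ∈ F, ∀ q ∈ F, p ≠ q → p.1 ≠ q.1)
    (hcols : ∀ p ∈ F, ∀ q ∈ F, p ≠ q → p.2 ≠ q.2) :
    IsGreatest {s : ℕ | ∃ R C : Finset (Fin n),
        (∀ p ∈ F, p.1 ∈ R ∨ p.2 ∈ C) ∧ s = (n - R.card) * (n - C.card)}
      ((n - (f + 1) / 2) * (n - f / 2)) :=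
  isolated_faults_max_allocation_general n f F hcard hrows hcols
end
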